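/- arXiv:1002.3800 — 2 statements merged into one kernel-verified Lean document; each statement's English description precedes it below -/
import Mathlib

section
/- Localization of the level sets of the maximal function. Let n ≥ 1, let F : ℝⁿ → [0,∞) be locally integrable, let λ > 0 and K ≥ 2^{n+2}. Let z ∈ ℝⁿ, r > 0, set Q = B(z, r) and B = B(z, 16r) (open Euclidean balls), and suppose there exists a point x₀ with |x₀ − z| ≤ 4r and MF(x₀) ≤ λ. Then |{MF > Kλ} ∩ Q| ≤ |{M(F·1_B) > Kλ/2}|, where 1_B is the characteristic function of B. -/
/-!
A ball witnessing `Kλ < MF(x)` for some `x ∈ B(z, r)` must lie inside `B(z, 16r)`: otherwise it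
has radius `ρ > 15r/2`, so its double contains `x₀`, and volume doubling gives
`Kλ < ⨍_{B(c,ρ)} F ≤ 2ⁿ ⨍_{B(c,2ρ)} F ≤ 2ⁿ MF(x₀) ≤ 2ⁿλ ≤ Kλ`. Inside `B(z, 16r)` the averages
of `F` and `F·1_B` agree, so the level set of `MF` in `B(z, r)` is contained in that of
`M(F·1_B)`.
-/

open MeasureTheory Metric Set
open scoped ENNReal NNReal

noncomputable section

/-- Uncentered Hardy–Littlewood maximal function over open Euclidean balls,
with values in `ℝ≥0∞`. -/
def maxFun (n : ℕ) (u : EuclideanSpace ℝ (Fin n) → ℝ) (x : EuclideanSpace ℝ (Fin n)) : ℝ≥0∞ :=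
  ⨆ (c : EuclideanSpace ℝ (Fin n)) (r : ℝ) (_ : x ∈ ball c r),
    (volume (ball c r))⁻¹ * ∫⁻ y in ball c r, ENNReal.ofReal |u y|

section BallAverage

variable {X : Type*} [MeasurableSpace X] [PseudoMetricSpace X]

def ballAverage (μ : Measure X) (u : X → ℝ) (c : X) (ρ : ℝ) : ℝ≥0∞ :=
  (μ (ball c ρ))⁻¹ * ∫⁻ y in ball c ρ, ENNReal.ofReal |u y| ∂μ

theorem ballAverage_indicator_of_subset [OpensMeasurableSpace X] (μ : Measure X) {s : Set X}
    (u : X → ℝ) {c : X} {ρ : ℝ} (h : ball c ρ ⊆ s) : ballAverage μ (s.indicator u) c ρ = ballAverage μ u c ρ := by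
  unfold ballAverage
  congr 1
  exact setLIntegral_congr_fun measurableSet_ball fun y hy => by rw [indicator_of_mem (h hy)]

end BallAverage

theorem ballAverage_le_pow_finrank_mul {E : Type*} [NormedAddCommGroup E] [NormedSpace ℝ E]
    [MeasurableSpace E] [BorelSpace E] [FiniteDimensional ℝ E] (μ : Measure E)
    [μ.IsAddHaarMeasure] (u : E → ℝ) (c : E) {ρ s : ℝ} (hρ : 0 < ρ) (hs : 1 ≤ s) :
    ballAverage μ u c ρ ≤ ENNReal.ofReal (s ^ Module.finrank ℝ E) * ballAverage μ u c (s * ρ) := by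
  have hscale : ENNReal.ofReal (s ^ Module.finrank ℝ E) ≠ 0 :=
    (ENNReal.ofReal_pos.mpr (by positivity)).ne'
  have hvol : μ (ball c (s * ρ)) = ENNReal.ofReal (s ^ Module.finrank ℝ E) * μ (ball c ρ) := by
    rw [Measure.addHaar_ball_mul_of_pos μ c (by linarith) ρ, Measure.addHaar_ball_center μ c]
  unfold ballAverage
  calc (μ (ball c ρ))⁻¹ * ∫⁻ y in ball c ρ, ENNReal.ofReal |u y| ∂μ
      ≤ (μ (ball c ρ))⁻¹ * ∫⁻ y in ball c (s * ρ), ENNReal.ofReal |u y| ∂μ := by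
        gcongr
        exact le_mul_of_one_le_left hρ.le hs
    _ = _ := by
        rw [hvol, ENNReal.mul_inv (Or.inl hscale) (Or.inl ENNReal.ofReal_ne_top), ← mul_assoc,
          ← mul_assoc, ENNReal.mul_inv_cancel hscale ENNReal.ofReal_ne_top, one_mul]

section MaximalFunction

variable {n : ℕ}

theorem maxFun_eq_iSup_ballAverage (u : EuclideanSpace ℝ (Fin n) → ℝ)
    (x : EuclideanSpace ℝ (Fin n)) :
    maxFun n u x = ⨆ (c : EuclideanSpace ℝ (Fin n)) (ρ : ℝ) (_ : x ∈ ball c ρ),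
      ballAverage volume u c ρ :=
  rfl

theorem ballAverage_le_maxFun (u : EuclideanSpace ℝ (Fin n) → ℝ)
    {x c : EuclideanSpace ℝ (Fin n)} {ρ : ℝ} (hx : x ∈ ball c ρ) :
    ballAverage volume u c ρ ≤ maxFun n u x := by
  rw [maxFun_eq_iSup_ballAverage]
  exact le_iSup₂_of_le c ρ (le_iSup_of_le hx le_rfl)

theorem lt_maxFun_iff (u : EuclideanSpace ℝ (Fin n) → ℝ) (x : EuclideanSpace ℝ (Fin n))
    (a : ℝ≥0∞) :
    a < maxFun n u x ↔ ∃ c ρ, x ∈ ball c ρ ∧ a < ballAverage volume u c ρ := by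
  simp only [maxFun_eq_iSup_ballAverage, lt_iSup_iff, exists_prop]

end MaximalFunction

theorem mem_ball_two_mul_of_not_subset_ball {X : Type*} [PseudoMetricSpace X]
    {x x₀ z c : X} {r ρ : ℝ} (hxz : x ∈ ball z r) (hxc : x ∈ ball c ρ)
    (hx₀ : dist x₀ z ≤ 4 * r) (hnot : ¬ ball c ρ ⊆ ball z (16 * r)) :
    x₀ ∈ ball c (2 * ρ) := by
  obtain ⟨y, hyc, hyz⟩ := not_subset.mp hnot
  rw [mem_ball] at hxz hxc hyc ⊢
  rw [mem_ball, not_lt] at hyz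
  linarith [dist_triangle4 y c x z, dist_triangle4 x₀ z x c, dist_comm c x, dist_comm z x,
    dist_nonneg (x := x) (y := z)]

theorem setOf_lt_maxFun_inter_ball_subset {n : ℕ} (F : EuclideanSpace ℝ (Fin n) → ℝ)
    {z x₀ : EuclideanSpace ℝ (Fin n)} {r : ℝ} {a b : ℝ≥0∞} (hx₀ : dist x₀ z ≤ 4 * r)
    (hMx₀ : maxFun n F x₀ ≤ b) (hab : 2 ^ n * b ≤ a) :
    {x | a < maxFun n F x} ∩ ball z r ⊆ {x | a < maxFun n ((ball z (16 * r)).indicator F) x} := by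
  rintro x ⟨hx, hxz⟩
  obtain ⟨c, ρ, hxc, hlt⟩ := (lt_maxFun_iff F x a).mp hx
  have hρ : 0 < ρ := dist_nonneg.trans_lt hxc
  have hsub : ball c ρ ⊆ ball z (16 * r) := by
    by_contra hnot
    have hx₀c := mem_ball_two_mul_of_not_subset_ball hxz hxc hx₀ hnot
    refine hlt.not_ge ?_
    calc ballAverage volume F c ρ
        ≤ ENNReal.ofReal (2 ^ n) * ballAverage volume F c (2 * ρ) := by
          simpa only [finrank_euclideanSpace_fin] using
            ballAverage_le_pow_finrank_mul volume F c hρ one_le_two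
      _ ≤ 2 ^ n * b := by
          rw [ENNReal.ofReal_pow zero_le_two, ENNReal.ofReal_ofNat]
          gcongr
          exact (ballAverage_le_maxFun F hx₀c).trans hMx₀
      _ ≤ a := hab
  exact (lt_maxFun_iff _ x a).mpr
    ⟨c, ρ, hxc, by rwa [ballAverage_indicator_of_subset volume F hsub]⟩

theorem statement4_general
    (n : ℕ)
    (F : EuclideanSpace ℝ (Fin n) → ℝ)
    (lam K : ℝ) (hK : (2 : ℝ) ^ (n + 2) ≤ K)
    (z : EuclideanSpace ℝ (Fin n)) (r : ℝ)
    (x₀ : EuclideanSpace ℝ (Fin n)) (hx₀ : dist x₀ z ≤ 4 * r)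
    (hMx₀ : maxFun n F x₀ ≤ ENNReal.ofReal lam) :
    volume ({x | ENNReal.ofReal (K * lam) < maxFun n F x} ∩ ball z r)
      ≤ volume {x | ENNReal.ofReal (K * lam / 2)
          < maxFun n (Set.indicator (ball z (16 * r)) F) x} := by
  have hpow : (2 : ℝ) ^ n ≤ K :=
    (pow_le_pow_right₀ one_le_two (Nat.le_add_right n 2)).trans hK
  have hlevel : 2 ^ n * ENNReal.ofReal lam ≤ ENNReal.ofReal (K * lam) := by
    rw [ENNReal.ofReal_mul ((pow_nonneg zero_le_two n).trans hpow)]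
    gcongr
    exact_mod_cast ENNReal.ofReal_le_ofReal hpow
  have hhalf : ENNReal.ofReal (K * lam / 2) ≤ ENNReal.ofReal (K * lam) := by
    rw [ENNReal.ofReal_div_of_pos two_pos, ENNReal.ofReal_ofNat]
    exact ENNReal.half_le_self
  refine measure_mono ((setOf_lt_maxFun_inter_ball_subset F hx₀ hMx₀ hlevel).trans ?_)
  exact fun x hx => hhalf.trans_lt hx

/-- Localization of the level sets of the maximal function: if `MF(x₀) ≤ λ` at some point
`x₀` with `|x₀ - z| ≤ 4r`, then `|{MF > Kλ} ∩ B(z,r)| ≤ |{M(F·1_{B(z,16r)}) > Kλ/2}|`. -/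
theorem statement4
    (n : ℕ) (hn : 1 ≤ n)
    (F : EuclideanSpace ℝ (Fin n) → ℝ) (hFmeas : Measurable F) (hFnonneg : ∀ x, 0 ≤ F x)
    (hFloc : LocallyIntegrable F volume)
    (lam K : ℝ) (hlam : 0 < lam) (hK : (2 : ℝ) ^ (n + 2) ≤ K)
    (z : EuclideanSpace ℝ (Fin n)) (r : ℝ) (hr : 0 < r)
    (x₀ : EuclideanSpace ℝ (Fin n)) (hx₀ : dist x₀ z ≤ 4 * r)
    (hMx₀ : maxFun n F x₀ ≤ ENNReal.ofReal lam) :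
    volume ({x | ENNReal.ofReal (K * lam) < maxFun n F x} ∩ ball z r)
      ≤ volume {x | ENNReal.ofReal (K * lam / 2)
          < maxFun n (Set.indicator (ball z (16 * r)) F) x} :=
  statement4_general n F lam K hK z r x₀ hx₀ hMx₀

end
end

section
/- Phragmén–Lindelöf bound on a half-plane from a horizontal boundary line and a vertical ray. Let y₀ < 0, c ≥ 0, M > 0 and A > 0. Let F be a complex-valued function that is continuous on the closed half-plane {z ∈ ℂ : Im z ≤ y₀} and holomorphic on its interior {Im z < y₀}, and assume: (i) |F(z)| ≤ M·e^{c|z|} for all z with Im z ≤ y₀; (ii) |F(x + i y₀)| ≤ A for all x ∈ ℝ; (iii) |F(i t)| ≤ A for all real t ≤ y₀. Then |F(z)| ≤ A for every z with Im z ≤ y₀. -/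
/-! Translating by `y₀ i` moves the half-plane to `{Im w ≤ 0}`, where the boundary line becomes
the real axis and the ray becomes the negative imaginary axis. These two half-lines cut the
lower half-plane into the third and fourth quadrants, on each of which the
Phragmén–Lindelöf principle applies: exponential growth of order one is well below the
critical order two of a quadrant. -/

open Complex Set Filter Asymptotics Bornology

namespace PhragmenLindelof

variable {E : Type*} [NormedAddCommGroup E] [NormedSpace ℂ E] {C : ℝ} {f : ℂ → E}

theorem lower_half_plane (hd : DiffContOnCl ℂ f {z | z.im < 0})
    (hB : ∃ c < (2 : ℝ), ∃ B,
      f =O[cobounded ℂ ⊓ 𝓟 {z | z.im < 0}] fun z => Real.exp (B * ‖z‖ ^ c))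
    (hre : ∀ x : ℝ, ‖f x‖ ≤ C) (him : ∀ x : ℝ, x ≤ 0 → ‖f (x * I)‖ ≤ C) {z : ℂ}
    (hz : z.im ≤ 0) : ‖f z‖ ≤ C := by
  obtain ⟨c, hc, B, hO⟩ := hB
  have of_subset {s : Set ℂ} (hs : s ⊆ {z | z.im < 0}) : DiffContOnCl ℂ f s ∧
      ∃ c < (2 : ℝ), ∃ B, f =O[cobounded ℂ ⊓ 𝓟 s] fun z => Real.exp (B * ‖z‖ ^ c) :=
    ⟨hd.mono hs, c, hc, B, hO.mono (inf_le_inf_left _ (principal_mono.2 hs))⟩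
  rcases le_total z.re 0 with hz_re | hz_re
  · obtain ⟨hd', hB'⟩ := of_subset fun w (hw : w ∈ Iio 0 ×ℂ Iio 0) => hw.2
    exact quadrant_III hd' hB' (fun x _ => hre x) him hz_re hz
  · obtain ⟨hd', hB'⟩ := of_subset fun w (hw : w ∈ Ioi 0 ×ℂ Iio 0) => hw.2
    exact quadrant_IV hd' hB' (fun x _ => hre x) him hz_re hz

end PhragmenLindelof

theorem isBigO_exp_mul_norm_add {F : Type*} [SeminormedAddCommGroup F] {c : ℝ} (hc : 0 ≤ c)
    (a : F) (l : Filter F) :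
    (fun z : F => Real.exp (c * ‖z + a‖)) =O[l] fun z => Real.exp (c * ‖z‖) := by
  refine IsBigO.of_bound (Real.exp (c * ‖a‖)) (Eventually.of_forall fun z => ?_)
  simp only [Real.norm_eq_abs, Real.abs_exp, ← Real.exp_add]
  gcongr
  linarith [mul_le_mul_of_nonneg_left (norm_add_le z a) hc]

theorem statement12_general
    (y₀ c M A : ℝ) (hc : 0 ≤ c)
    (F : ℂ → ℂ)
    (hcont : ContinuousOn F {z : ℂ | z.im ≤ y₀})
    (hholo : DifferentiableOn ℂ F {z : ℂ | z.im < y₀})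
    (hgrowth : ∀ z : ℂ, z.im ≤ y₀ → ‖F z‖ ≤ M * Real.exp (c * ‖z‖))
    (hline : ∀ x : ℝ, ‖F (x + y₀ * Complex.I)‖ ≤ A)
    (hray : ∀ t : ℝ, t ≤ y₀ → ‖F (t * Complex.I)‖ ≤ A) :
    ∀ z : ℂ, z.im ≤ y₀ → ‖F z‖ ≤ A := by
  intro z hz
  set G : ℂ → ℂ := fun w => F (w + y₀ * I)
  have hF : DiffContOnCl ℂ F {z | z.im < y₀} := ⟨hholo, by rwa [closure_setOfPred_im_lt]⟩
  have hG : DiffContOnCl ℂ G {w | w.im < 0} :=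
    hF.comp (differentiable_id.add_const _).diffContOnCl fun w (hw : w.im < 0) => by simpa
  have hGO : G =O[cobounded ℂ ⊓ 𝓟 {w | w.im < 0}] fun w => Real.exp (c * ‖w‖ ^ (1 : ℝ)) := by
    simp only [Real.rpow_one]
    refine (IsBigO.of_bound M ?_).trans (isBigO_exp_mul_norm_add hc (y₀ * I) _)
    refine eventually_inf_principal.2 (Eventually.of_forall fun w (hw : w.im < 0) => ?_)
    simpa using hgrowth _ (by simpa using hw.le)
  have hGray (t : ℝ) (ht : t ≤ 0) : ‖G (t * I)‖ ≤ A := by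
    simpa [G, ← add_mul] using hray (t + y₀) (by linarith)
  simpa [G] using PhragmenLindelof.lower_half_plane hG ⟨1, one_lt_two, c, hGO⟩ hline hGray
    (z := z - y₀ * I) (by simpa using hz)

/-- Phragmén–Lindelöf bound on the half-plane `{Im z ≤ y₀}` (with `y₀ < 0`) from an
exponential growth bound, a bound `A` on the horizontal boundary line `Im z = y₀`, and a
bound `A` on the vertical ray `{it : t ≤ y₀}`. -/
theorem statement12
    (y₀ c M A : ℝ) (hy₀ : y₀ < 0) (hc : 0 ≤ c) (hM : 0 < M) (hA : 0 < A)
    (F : ℂ → ℂ)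
    (hcont : ContinuousOn F {z : ℂ | z.im ≤ y₀})
    (hholo : DifferentiableOn ℂ F {z : ℂ | z.im < y₀})
    (hgrowth : ∀ z : ℂ, z.im ≤ y₀ → ‖F z‖ ≤ M * Real.exp (c * ‖z‖))
    (hline : ∀ x : ℝ, ‖F (x + y₀ * Complex.I)‖ ≤ A)
    (hray : ∀ t : ℝ, t ≤ y₀ → ‖F (t * Complex.I)‖ ≤ A) :
    ∀ z : ℂ, z.im ≤ y₀ → ‖F z‖ ≤ A :=
  statement12_general y₀ c M A hc F hcont hholo hgrowth hline hray
end
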